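/- arXiv:math/0411563 — 4 statements merged into one kernel-verified Lean document; each statement's English description precedes it below -/
import Mathlib

section
/- Define r_d = N(r,d) − Σ_{i=d}^{e} N(r, i−d) s_i for a socle-vector s = (s_0=0, s_1, ..., s_e) with s_e > 0 and N(r,d) = C(r−1+d,d), r ≥ 2, e ≥ 2. Then r_0 < 0, r_e ≥ 0, and r_{d+1} > r_d for every 0 ≤ d ≤ e−1. -/
/-- The value of a candidate `i`-binomial expansion with list of top entries `L`:
`C(L[0], i) + C(L[1], i-1) + ...`. -/
def expValue (i : ℕ) (L : List ℕ) : ℕ :=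
  ∑ k ∈ Finset.range L.length, (L.getD k 0).choose (i - k)

/-- `L = [n_i, n_{i-1}, ..., n_j]` is the `i`-binomial expansion of `n`:
`n = C(n_i,i) + C(n_{i-1},i-1) + ... + C(n_j,j)` with
`n_i > n_{i-1} > ... > n_j ≥ j ≥ 1`.  Here `j = i + 1 - L.length`. -/
def IsBinExp (n i : ℕ) (L : List ℕ) : Prop :=
  L ≠ [] ∧ L.length ≤ i ∧ L.Chain' (· > ·) ∧
    i + 1 - L.length ≤ L.getLast! ∧ expValue i L = n

/-- `(n_{(i)})^{+1}_{+1}`: each binomial `C(m,k)` of the expansion replaced by `C(m+1,k+1)`. -/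
def expShiftUp (i : ℕ) (L : List ℕ) : ℕ :=
  ∑ k ∈ Finset.range L.length, (L.getD k 0 + 1).choose (i - k + 1)

/-- `(n_{(i)})^{-1}_{-1}`: each binomial `C(m,k)` of the expansion replaced by `C(m-1,k-1)`. -/
def expShiftDown (i : ℕ) (L : List ℕ) : ℕ :=
  ∑ k ∈ Finset.range L.length, (L.getD k 0 - 1).choose (i - k - 1)

/-- Macaulay's condition: `h` (indexed from degree 0) is an O-sequence iff `h_0 = 1` and
`h_{d+1} ≤ ((h_d)_{(d)})^{+1}_{+1}` for all relevant `d ≥ 1`. -/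
def OSeq (h : List ℕ) : Prop :=
  h.getD 0 0 = 1 ∧ ∀ d, 1 ≤ d → d + 1 < h.length →
    ∀ L, IsBinExp (h.getD d 0) d L → h.getD (d + 1) 0 ≤ expShiftUp d L

/-- First difference `Δv = (v_0, v_1 - v_0, v_2 - v_1, ...)`. -/
def firstDiff (v : List ℕ) : List ℕ := List.zipWith (· - ·) v (0 :: v)

/-- `N(r,d) = C(r-1+d, d)`, the dimension of the degree-`d` part of a polynomial
ring in `r` variables. -/
def N (r d : ℕ) : ℕ := (r - 1 + d).choose d

/-- `r_d = N(r,d) - Σ_{i=d}^e N(r,i-d) s_i` (as an integer). -/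
def rdNum (r e : ℕ) (s : ℕ → ℕ) (d : ℕ) : ℤ :=
  (N r d : ℤ) - ∑ i ∈ Finset.Icc d e, (N r (i - d) : ℤ) * (s i : ℤ)

lemma N_lt_succ (r : ℕ) (hr : 2 ≤ r) (d : ℕ) : N r d < N r (d + 1) := by
  unfold N
  have h1 : r - 1 + (d + 1) = (r - 1 + d) + 1 := by omega
  rw [h1, Nat.choose_succ_succ]
  have h2 : 0 < (r - 1 + d).choose (d + 1) := Nat.choose_pos (by omega)
  exact Nat.lt_add_of_pos_right h2

/-- for a socle-vector `s = (s_0 = 0, s_1, ..., s_e)` with `s_e > 0`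
(so in particular `s_e ≤ N(r,e)`, since `s` is the socle-vector of some algebra of
embedding dimension ≤ r), with `r ≥ 2`, `e ≥ 2`:
`r_0 < 0`, `r_e ≥ 0`, and `r_{d+1} > r_d` for all `0 ≤ d ≤ e-1`. -/
theorem rd_properties (r e : ℕ) (s : ℕ → ℕ) (hr : 2 ≤ r) (he : 2 ≤ e)
    (h0 : s 0 = 0) (hse : 1 ≤ s e) (hsoc : s e ≤ N r e) :
    rdNum r e s 0 < 0 ∧ 0 ≤ rdNum r e s e ∧
      ∀ d, d ≤ e - 1 → rdNum r e s d < rdNum r e s (d + 1) := by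

  have hN : StrictMono (N r) := strictMono_nat_of_lt_succ (N_lt_succ r hr)
  have hN0 : N r 0 = 1 := by simp [N]
  refine ⟨?_, ?_, ?_⟩
  · unfold rdNum
    have hterm : (N r e : ℤ) * s e ≤ ∑ i ∈ Finset.Icc 0 e, (N r i : ℤ) * s i := by
      apply Finset.single_le_sum (f := fun i => (N r i : ℤ) * (s i : ℤ))
      · intro i _; positivity
      · simp
    have h2 : 2 ≤ N r e := by
      have := hN (show 0 < e by omega)
      omega
    have h3 : (2 : ℤ) ≤ (N r e : ℤ) * s e := by
      have h4 : (1 : ℤ) ≤ (s e : ℤ) := by exact_mod_cast hse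
      have h5 : (2 : ℤ) ≤ (N r e : ℤ) := by exact_mod_cast h2
      nlinarith
    rw [hN0]
    simp only [Nat.sub_zero]
    push_cast
    linarith
  · unfold rdNum
    rw [Finset.Icc_self, Finset.sum_singleton]
    simp only [Nat.sub_self, hN0]
    have : (s e : ℤ) ≤ (N r e : ℤ) := by exact_mod_cast hsoc
    push_cast
    linarith
  · intro d hd
    have hde : d + 1 ≤ e := by omega
    unfold rdNum
    have hsub : Finset.Icc (d + 1) e ⊆ Finset.Icc d e := by
      intro i hi
      simp only [Finset.mem_Icc] at *
      omega
    have hsum : ∑ i ∈ Finset.Icc (d + 1) e, (N r (i - (d + 1)) : ℤ) * s i ≤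
        ∑ i ∈ Finset.Icc d e, (N r (i - d) : ℤ) * s i := by
      calc ∑ i ∈ Finset.Icc (d + 1) e, (N r (i - (d + 1)) : ℤ) * s i
          ≤ ∑ i ∈ Finset.Icc (d + 1) e, (N r (i - d) : ℤ) * s i := by
            apply Finset.sum_le_sum
            intro i hi
            simp only [Finset.mem_Icc] at hi
            have : N r (i - (d + 1)) ≤ N r (i - d) := hN.monotone (by omega)
            have h4 : (N r (i - (d + 1)) : ℤ) ≤ (N r (i - d) : ℤ) := by exact_mod_cast this
            have : (0 : ℤ) ≤ (s i : ℤ) := by positivity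
            nlinarith
        _ ≤ ∑ i ∈ Finset.Icc d e, (N r (i - d) : ℤ) * s i := by
            apply Finset.sum_le_sum_of_subset_of_nonneg hsub
            intro i _ _
            positivity
    have hlt : (N r d : ℤ) < (N r (d + 1) : ℤ) := by exact_mod_cast hN (lt_add_one d)
    linarith
end

section
/- With r_d and N(r,d) as above and b the unique index with 1 ≤ b ≤ e, r_b ≥ 0, r_{b−1} < 0: the inequality max{N(r,b−1) − (N(r,b) − r_b), 0} ≤ N(r,b−1) − ((N(r,b) − r_b)_{(b)})^{−1}_{−1} holds, where (n_{(i)})^a_a denotes shifting every binomial in the i-binomial expansion of n by a in both arguments. -/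
/-- `Σ_{i=d}^e N(r,i-d) s_i`,  so that `r_d = N(r,d) - socSum r e s d`. -/
def socSum (r e : ℕ) (s : ℕ → ℕ) (d : ℕ) : ℕ :=
  ∑ i ∈ Finset.Icc d e, N r (i - d) * s i

/-- A structural-recursion version of the validity of a binomial expansion. -/
def Valid : ℕ → List ℕ → Prop
  | _, [] => False
  | b, [a] => 1 ≤ b ∧ b ≤ a
  | b, a :: x :: t => x < a ∧ Valid (b - 1) (x :: t)

lemma expValue_nil (b : ℕ) : expValue b [] = 0 := by simp [expValue]

lemma expShiftDown_nil (b : ℕ) : expShiftDown b [] = 0 := by simp [expShiftDown]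

lemma expValue_cons (b a : ℕ) (t : List ℕ) :
    expValue b (a :: t) = a.choose b + expValue (b - 1) t := by
  unfold expValue
  rw [List.length_cons, Finset.sum_range_succ']
  simp only [List.getD_cons_succ, List.getD_cons_zero, Nat.sub_zero]
  rw [Nat.add_comm]
  congr 1
  refine Finset.sum_congr rfl fun k _ => ?_
  congr 1
  omega

lemma expShiftDown_cons (b a : ℕ) (t : List ℕ) :
    expShiftDown b (a :: t) = (a - 1).choose (b - 1) + expShiftDown (b - 1) t := by
  unfold expShiftDown
  rw [List.length_cons, Finset.sum_range_succ']
  simp only [List.getD_cons_succ, List.getD_cons_zero, Nat.sub_zero]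
  rw [Nat.add_comm]
  congr 1
  refine Finset.sum_congr rfl fun k _ => ?_
  congr 1
  omega

lemma valid_head {b : ℕ} {L : List ℕ} (h : Valid b L) : 1 ≤ b ∧ b ≤ L.headD 0 := by
  induction L generalizing b with
  | nil => exact h.elim
  | cons a t ih =>
    cases t with
    | nil => exact h
    | cons x t' =>
      obtain ⟨hxa, hv⟩ := h
      obtain ⟨h1, h2⟩ := ih hv
      simp only [List.headD_cons] at h2 ⊢
      omega

lemma choose_pred_le {a b : ℕ} (hb : 1 ≤ b) (hba : b ≤ a) :
    (a - 1).choose (b - 1) ≤ a.choose b := by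
  obtain ⟨a', rfl⟩ : ∃ a', a = a' + 1 := ⟨a - 1, by omega⟩
  obtain ⟨b', rfl⟩ : ∃ b', b = b' + 1 := ⟨b - 1, by omega⟩
  simp only [Nat.add_sub_cancel]
  rw [Nat.choose_succ_succ']
  exact Nat.le_add_right _ _

lemma shiftDown_le_value {b : ℕ} {L : List ℕ} (h : Valid b L) :
    expShiftDown b L ≤ expValue b L := by
  induction L generalizing b with
  | nil => exact h.elim
  | cons a t ih =>
    have hh := valid_head h
    simp only [List.headD_cons] at hh
    rw [expShiftDown_cons, expValue_cons]
    cases t with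
    | nil => simpa [expShiftDown_nil, expValue_nil] using choose_pred_le hh.1 hh.2
    | cons x t' =>
      exact Nat.add_le_add (choose_pred_le hh.1 hh.2) (ih h.2)

lemma shiftDown_le_choose {b : ℕ} {L : List ℕ} (h : Valid b L) :
    expShiftDown b L ≤ (L.headD 0).choose (b - 1) := by
  induction L generalizing b with
  | nil => exact h.elim
  | cons a t ih =>
    have hh := valid_head h
    simp only [List.headD_cons] at hh ⊢
    rw [expShiftDown_cons]
    cases t with
    | nil =>
      rw [expShiftDown_nil]
      simpa using Nat.choose_le_choose (b - 1) (Nat.sub_le a 1)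
    | cons x t' =>
      obtain ⟨hxa, hv⟩ := h
      have ht := ih hv
      have hxh := valid_head hv
      simp only [List.headD_cons] at ht hxh
      have h2b : 2 ≤ b := by omega
      have hxle : x.choose (b - 1 - 1) ≤ (a - 1).choose (b - 1 - 1) :=
        Nat.choose_le_choose _ (by omega)
      have hpascal : (a - 1).choose (b - 1 - 1) + (a - 1).choose (b - 1) = a.choose (b - 1) := by
        obtain ⟨a', rfl⟩ : ∃ a', a = a' + 1 := ⟨a - 1, by omega⟩
        obtain ⟨b2, rfl⟩ : ∃ b2, b = b2 + 2 := ⟨b - 2, by omega⟩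
        have e1 : b2 + 2 - 1 = b2 + 1 := rfl
        have e2 : b2 + 2 - 1 - 1 = b2 := rfl
        simp only [Nat.add_sub_cancel, e1, e2]
        rw [Nat.choose_succ_succ']
      omega

lemma choose_head_le {b : ℕ} {L : List ℕ} (h : Valid b L) :
    (L.headD 0).choose b ≤ expValue b L := by
  cases L with
  | nil => exact h.elim
  | cons a t =>
    rw [expValue_cons]
    simp

lemma value_pos {b : ℕ} {L : List ℕ} (h : Valid b L) : 1 ≤ expValue b L := by
  have hh := valid_head h
  have := choose_head_le h
  have hpos : 0 < (L.headD 0).choose b := Nat.choose_pos hh.2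
  omega

lemma valid_of_chain {b : ℕ} {L : List ℕ} (hne : L ≠ []) (hlen : L.length ≤ b)
    (hch : L.Chain' (· > ·)) (hlast : b + 1 - L.length ≤ L.getLast!) : Valid b L := by
  induction L generalizing b with
  | nil => exact hne rfl
  | cons a t ih =>
    cases t with
    | nil =>
      simp only [List.length_cons, List.length_nil] at hlen
      have hla : (([a] : List ℕ)).getLast! = a := by simp [List.getLast!]
      rw [hla] at hlast
      simp only [List.length_cons, List.length_nil] at hlast
      exact ⟨by omega, by omega⟩
    | cons x t' =>
      obtain ⟨hax, hch'⟩ := List.isChain_cons_cons.mp hch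
      refine ⟨hax, ih (by simp) (by simp at hlen ⊢; omega) hch' ?_⟩
      have hlast' : (a :: x :: t').getLast! = (x :: t').getLast! := by
        simp [List.getLast!, List.getLast?]
      rw [hlast'] at hlast
      simp only [List.length_cons] at hlast ⊢
      omega

lemma valid_of_isBinExp {n b : ℕ} {L : List ℕ} (h : IsBinExp n b L) : Valid b L :=
  valid_of_chain h.1 h.2.1 h.2.2.1 h.2.2.2.1

/-- with `b` the unique index with `1 ≤ b ≤ e`, `r_b ≥ 0`,
`r_{b-1} < 0` (expressed via `N(r,b) - r_b = socSum r e s b`),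
`max{N(r,b-1) - (N(r,b) - r_b), 0} ≤ N(r,b-1) - ((N(r,b) - r_b)_{(b)})^{-1}_{-1}`. -/
theorem max_le_shiftDown_bound (r e b : ℕ) (s : ℕ → ℕ) (hr : 2 ≤ r) (he : 2 ≤ e)
    (h0 : s 0 = 0) (hse : 1 ≤ s e) (hb1 : 1 ≤ b) (hb2 : b ≤ e)
    (hrb : socSum r e s b ≤ N r b)               -- `r_b ≥ 0`
    (hrb1 : N r (b - 1) < socSum r e s (b - 1))  -- `r_{b-1} < 0`
    (L : List ℕ) (hL : IsBinExp (socSum r e s b) b L) :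
    max ((N r (b - 1) : ℤ) - (socSum r e s b : ℤ)) 0
      ≤ (N r (b - 1) : ℤ) - (expShiftDown b L : ℤ) := by
  obtain ⟨hne, hlen, hch, hlast, hval⟩ := hL
  have hv : Valid b L := valid_of_chain hne hlen hch hlast
  set n := socSum r e s b with hn
  set M := r - 1 + b with hM
  have hNb : N r b = M.choose b := rfl
  have hNb1 : N r (b - 1) = (M - 1).choose (b - 1) := by
    unfold N
    congr 1
    omega
  have hMb : b + 1 ≤ M := by omega
  have hD_le_n : expShiftDown b L ≤ n := hval ▸ shiftDown_le_value hv
  -- head of L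
  obtain ⟨a, t, rfl⟩ : ∃ a t, L = a :: t := by
    cases L with
    | nil => exact absurd rfl hne
    | cons a t => exact ⟨a, t, rfl⟩
  have hhead := valid_head hv
  simp only [List.headD_cons] at hhead
  have hchoose_le : a.choose b ≤ M.choose b := by
    have h1 : a.choose b ≤ n := by
      have := choose_head_le hv
      simp only [List.headD_cons] at this
      omega
    calc a.choose b ≤ n := h1
      _ ≤ M.choose b := hNb ▸ hrb
  have haM : a ≤ M := by
    by_contra hcon
    push_neg at hcon
    have h1 : (M + 1).choose b ≤ a.choose b := Nat.choose_le_choose b (by omega)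
    have h2 : (M + 1).choose b = M.choose (b - 1) + M.choose b := by
      obtain ⟨b', rfl⟩ : ∃ b', b = b' + 1 := ⟨b - 1, by omega⟩
      simp only [Nat.add_sub_cancel]
      rw [Nat.choose_succ_succ']
    have h3 : 0 < M.choose (b - 1) := Nat.choose_pos (by omega)
    omega
  have hD_le_N1 : expShiftDown b (a :: t) ≤ N r (b - 1) := by
    rw [hNb1]
    rcases eq_or_lt_of_le haM with heq | hlt
    · -- a = M : then t = [] and the shift-down is exactly C(M-1, b-1)
      have hvalcons : a.choose b + expValue (b - 1) t = n := by
        rw [← hval, expValue_cons]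
      have ht0 : expValue (b - 1) t = 0 := by
        have h1 : n ≤ M.choose b := hNb ▸ hrb
        rw [heq] at hvalcons
        omega
      have htnil : t = [] := by
        cases t with
        | nil => rfl
        | cons x t' =>
          have hvt : Valid (b - 1) (x :: t') := hv.2
          have := value_pos hvt
          omega
      subst htnil
      rw [expShiftDown_cons, expShiftDown_nil, heq]
      omega
    · -- a ≤ M - 1
      have h1 : expShiftDown b (a :: t) ≤ a.choose (b - 1) := by
        have := shiftDown_le_choose hv
        simpa using this
      calc expShiftDown b (a :: t) ≤ a.choose (b - 1) := h1
        _ ≤ (M - 1).choose (b - 1) := Nat.choose_le_choose _ (by omega)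
  apply max_le
  · omega
  · omega
end

section
/- Let a, b be positive integers with b > 1. The smallest integer t such that a ≤ (t_{(b−1)})^{+1}_{+1} is t = (a_{(b)})^{−1}_{−1}. -/
/-!
For a list `L` let `L⁺` add one to every entry. If `L` is the `(b-1)`-binomial expansion of `t`,
then `L⁺` has the shape of a `b`-expansion, its value is `(t_{(b-1)})^{+1}_{+1}` and its
`(·)^{-1}_{-1}` shift is `t`; appending a last term `C(j, j) = 1` to `L⁺` raises both by one.
Both halves of the theorem thereby reduce to the monotonicity of `n ↦ (n_{(b)})^{-1}_{-1}`, which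
holds because expansions compare lexicographically and in either sum the leading term dominates
the rest.
-/

namespace Macaulay

open Finset

section ListSums

variable (f : ℕ → ℕ → ℕ) (i : ℕ)

lemma sum_range_length_cons (l : ℕ) (L : List ℕ) :
    ∑ k ∈ range (l :: L).length, f ((l :: L).getD k 0) (i - k) =
      f l i + ∑ k ∈ range L.length, f (L.getD k 0) (i - 1 - k) := by
  rw [List.length_cons, sum_range_succ', add_comm]
  congr 1
  refine sum_congr rfl fun k _ => ?_
  rw [List.getD_cons_succ, Nat.sub_sub, Nat.add_comm 1 k]

lemma sum_range_length_append_singleton (x : ℕ) (L : List ℕ) :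
    ∑ k ∈ range (L ++ [x]).length, f ((L ++ [x]).getD k 0) (i - k) =
      ∑ k ∈ range L.length, f (L.getD k 0) (i - k) + f x (i - L.length) := by
  rw [List.length_append, List.length_singleton, sum_range_succ,
    List.getD_append_right _ _ _ _ le_rfl, Nat.sub_self, List.getD_cons_zero]
  congr 1
  exact sum_congr rfl fun k hk => by rw [List.getD_append _ _ _ _ (mem_range.mp hk)]

end ListSums

variable {i : ℕ} {L : List ℕ}

lemma expValue_nil : expValue i [] = 0 := rfl

lemma expShiftDown_nil : expShiftDown i [] = 0 := rfl

lemma expValue_cons (l : ℕ) :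
    expValue i (l :: L) = l.choose i + expValue (i - 1) L :=
  sum_range_length_cons (fun x j => x.choose j) i l L

lemma expShiftDown_cons (l : ℕ) :
    expShiftDown i (l :: L) = (l - 1).choose (i - 1) + expShiftDown (i - 1) L :=
  sum_range_length_cons (fun x j => (x - 1).choose (j - 1)) i l L

lemma expValue_append_singleton (x : ℕ) :
    expValue i (L ++ [x]) = expValue i L + x.choose (i - L.length) :=
  sum_range_length_append_singleton (fun x j => x.choose j) i x L

lemma expShiftDown_append_singleton (x : ℕ) :
    expShiftDown i (L ++ [x]) = expShiftDown i L + (x - 1).choose (i - L.length - 1) :=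
  sum_range_length_append_singleton (fun x j => (x - 1).choose (j - 1)) i x L

lemma expValue_map_succ (hL : L.length ≤ i + 1) :
    expValue (i + 1) (L.map (· + 1)) = expShiftUp i L := by
  rw [expValue, expShiftUp, List.length_map]
  refine sum_congr rfl fun k hk => ?_
  have hk := mem_range.mp hk
  rw [List.getD_eq_getElem _ _ (by simpa using hk), List.getElem_map,
    List.getD_eq_getElem _ _ hk]
  congr 1
  omega

lemma expShiftDown_map_succ :
    expShiftDown (i + 1) (L.map (· + 1)) = expValue i L := by
  rw [expValue, expShiftDown, List.length_map]
  refine sum_congr rfl fun k hk => ?_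
  have hk := mem_range.mp hk
  rw [List.getD_eq_getElem _ _ (by simpa using hk), List.getElem_map,
    List.getD_eq_getElem _ _ hk]
  congr 1
  omega

/-- A strictly decreasing list `[n_i, n_{i-1}, …]` with `n_k ≥ k`, possibly empty: the shape of
an `i`-binomial expansion, in a form that supports induction on `i`. -/
inductive Admissible : ℕ → List ℕ → Prop
  | nil (i : ℕ) : Admissible i []
  | cons {i l : ℕ} {L : List ℕ} : i + 1 ≤ l → (∀ x ∈ L.head?, x < l) →
      Admissible i L → Admissible (i + 1) (l :: L)

namespace Admissible

lemma length_le (h : Admissible i L) : L.length ≤ i := by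
  induction h with
  | nil => simp
  | cons _ _ _ ih => simpa using ih

lemma le_head {x : ℕ} {T : List ℕ} (h : Admissible i (x :: T)) : i ≤ x := by
  cases h; omega

lemma map_succ (h : Admissible i L) : Admissible (i + 1) (L.map (· + 1)) := by
  induction h with
  | nil i => exact nil _
  | cons hl hhead _ ih =>
    refine cons (Nat.succ_le_succ hl) ?_ ih
    simp only [List.head?_map, Option.mem_def, Option.map_eq_some_iff]
    rintro _ ⟨y, hy, rfl⟩
    have := hhead y hy
    omega

lemma map_succ_append (h : Admissible i L) :
    Admissible (i + 1) (L.map (· + 1) ++ [i + 1 - L.length]) := by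
  induction h with
  | nil i => exact cons (by simp) (by simp) (nil i)
  | @cons i l L hl hhead hL ih =>
    have hlen : i + 1 + 1 - (l :: L).length = i + 1 - L.length := by
      simp only [List.length_cons]; omega
    rw [List.map_cons, List.cons_append, hlen]
    refine cons (by omega) ?_ ih
    cases L with
    | nil => simp; omega
    | cons y T => have := hhead y rfl; simp; omega

lemma eq_nil_of_zero (h : Admissible 0 L) : L = [] := by
  cases h; rfl

lemma iff_of_ne_nil (hL : L ≠ []) :
    Admissible i L ↔ L.length ≤ i ∧ L.IsChain (· > ·) ∧ i + 1 - L.length ≤ L.getLast! := by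
  induction L generalizing i with
  | nil => exact absurd rfl hL
  | cons x T ih =>
    cases T with
    | nil =>
      constructor
      · rintro ⟨⟩; simp; omega
      · rintro ⟨hlen, -, hlast⟩
        obtain ⟨i, rfl⟩ : ∃ i', i = i' + 1 := ⟨i - 1, by simp at hlen; omega⟩
        exact cons (by simpa using hlast) (by simp) (nil i)
    | cons y T =>
      rw [List.isChain_cons_cons, List.getLast!_cons_eq_getLastD, List.getLastD_cons,
        ← List.getLast!_cons_eq_getLastD]
      simp only [List.length_cons] at ih ⊢
      constructor
      · rintro (_ | ⟨_, hhead, hT⟩)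
        obtain ⟨hlen, hchain, hlast⟩ := (ih (List.cons_ne_nil y T)).mp hT
        refine ⟨?_, ⟨hhead y rfl, hchain⟩, ?_⟩ <;> omega
      · rintro ⟨hlen, ⟨hxy, hchain⟩, hlast⟩
        obtain ⟨i, rfl⟩ : ∃ i', i = i' + 1 := ⟨i - 1, by omega⟩
        have hT := (ih (i := i) (List.cons_ne_nil y T)).mpr ⟨by omega, hchain, by omega⟩
        have := hT.le_head
        exact cons (by omega) (by simpa using hxy) hT

lemma expValue_lt_choose (h : Admissible i L) {c : ℕ} (hc : ∀ x ∈ L.head?, x < c)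
    (hic : i ≤ c) : expValue i L < c.choose i := by
  induction h generalizing c with
  | nil i => simpa [expValue_nil] using Nat.choose_pos hic
  | @cons i l L _ hhead _ ih =>
    have hlc : l < c := hc l rfl
    have := ih hhead (by omega)
    have := Nat.choose_le_choose (i + 1) (Nat.succ_le_of_lt hlc)
    rw [expValue_cons, Nat.add_sub_cancel]
    rw [Nat.choose_succ_succ'] at this
    omega

lemma expShiftDown_le_choose (h : Admissible i L) {c : ℕ}
    (hc : ∀ x ∈ L.head?, x < c) : expShiftDown i L ≤ (c - 1).choose (i - 1) := by
  induction h generalizing c with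
  | nil i => exact Nat.zero_le _
  | @cons i l L hl hhead hL ih =>
    have hlc : l < c := hc l rfl
    rw [expShiftDown_cons, Nat.add_sub_cancel]
    rcases i with _ | i
    · simp [hL.eq_nil_of_zero, expShiftDown_nil]
    · have := ih hhead
      rw [Nat.add_sub_cancel] at this
      have := Nat.choose_le_choose (i + 1) (show l ≤ c - 1 by omega)
      rw [show l = l - 1 + 1 by omega, Nat.choose_succ_succ'] at this
      omega

lemma expShiftDown_pos {l : ℕ} (h : Admissible i (l :: L)) :
    0 < expShiftDown i (l :: L) := by
  have := h.le_head
  rw [expShiftDown_cons]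
  exact Nat.add_pos_left (Nat.choose_pos (by omega)) _

lemma expValue_lt_of_head_lt {l m : ℕ} {M : List ℕ} (hM : Admissible i (m :: M))
    (hml : m < l) : expValue i (m :: M) < expValue i (l :: L) :=
  calc expValue i (m :: M) < (m + 1).choose i :=
        hM.expValue_lt_choose (by simp) (hM.le_head.trans (Nat.le_succ m))
    _ ≤ l.choose i := Nat.choose_le_choose i hml
    _ ≤ expValue i (l :: L) := by rw [expValue_cons]; exact Nat.le_add_right _ _

lemma expShiftDown_le_of_head_lt {l m : ℕ} {M : List ℕ} (hL : Admissible i (l :: L))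
    (hlm : l < m) : expShiftDown i (l :: L) ≤ expShiftDown i (m :: M) :=
  calc expShiftDown i (l :: L) ≤ (l + 1 - 1).choose (i - 1) :=
        hL.expShiftDown_le_choose (by simp)
    _ ≤ (m - 1).choose (i - 1) := Nat.choose_le_choose _ (by omega)
    _ ≤ expShiftDown i (m :: M) := by rw [expShiftDown_cons]; exact Nat.le_add_right _ _

theorem expShiftDown_mono {M : List ℕ} (hL : Admissible i L) (hM : Admissible i M)
    (h : expValue i L ≤ expValue i M) : expShiftDown i L ≤ expShiftDown i M := by
  induction hL generalizing M with
  | nil => exact Nat.zero_le _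
  | @cons i l L hl hhead hL ih =>
    rcases hM with _ | @⟨_, m, M, hm, hhead', hM'⟩
    · have := Nat.choose_pos hl
      rw [expValue_cons, expValue_nil] at h
      omega
    rcases lt_trichotomy l m with hlm | rfl | hml
    · exact (cons hl hhead hL).expShiftDown_le_of_head_lt hlm
    · rw [expValue_cons, expValue_cons, Nat.add_sub_cancel] at h
      rw [expShiftDown_cons, expShiftDown_cons, Nat.add_sub_cancel]
      have := ih hM' (by omega)
      omega
    · exact absurd h (not_le.mpr ((cons hm hhead' hM').expValue_lt_of_head_lt hml))

lemma exists_succ_expValue_eq (h : Admissible i L) :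
    ∃ M, Admissible (i + 1) M ∧ expValue (i + 1) M = expShiftUp i L + 1 ∧
      expShiftDown (i + 1) M = expValue i L + 1 := by
  have hlen : L.length ≤ i + 1 := h.length_le.trans i.le_succ
  refine ⟨_, h.map_succ_append, ?_, ?_⟩
  · rw [expValue_append_singleton, expValue_map_succ hlen, List.length_map, Nat.choose_self]
  · rw [expShiftDown_append_singleton, expShiftDown_map_succ, List.length_map, Nat.choose_self]

end Admissible

theorem isBinExp_iff {n : ℕ} : IsBinExp n i L ↔ L ≠ [] ∧ Admissible i L ∧ expValue i L = n := by
  refine ⟨fun ⟨hL, hlen, hchain, hlast, hval⟩ => ?_, fun ⟨hL, hadm, hval⟩ => ?_⟩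
  · exact ⟨hL, (Admissible.iff_of_ne_nil hL).mpr ⟨hlen, hchain, hlast⟩, hval⟩
  · obtain ⟨hlen, hchain, hlast⟩ := (Admissible.iff_of_ne_nil hL).mp hadm
    exact ⟨hL, hlen, hchain, hlast, hval⟩

lemma exists_choose_le_lt_choose_succ {n k : ℕ} (hk : k ≠ 0) (hn : n ≠ 0) :
    ∃ m, k ≤ m ∧ m.choose k ≤ n ∧ n < (m + 1).choose k := by
  have hex : ∃ m, n < (m + 1).choose k := ⟨n + k - 1, by
    calc n < (n + 1).choose n := by rw [Nat.choose_succ_self_right]; omega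
      _ ≤ (n + k).choose n := Nat.choose_le_choose n (by omega)
      _ = (n + k - 1 + 1).choose k := by rw [Nat.choose_symm_add]; congr 1; omega⟩
  classical
  obtain ⟨m, hlt, hmin⟩ : ∃ m, n < (m + 1).choose k ∧ ∀ j < m, ¬n < (j + 1).choose k :=
    ⟨Nat.find hex, Nat.find_spec hex, fun _ => Nat.find_min hex⟩
  have hle : m.choose k ≤ n := by
    cases m with
    | zero => rw [Nat.choose_eq_zero_of_lt (Nat.pos_of_ne_zero hk)]; exact Nat.zero_le n
    | succ m => exact not_lt.mp (hmin m m.lt_add_one)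
  refine ⟨m, ?_, hle, hlt⟩
  by_contra! hmk
  obtain hmk | rfl : m + 1 < k ∨ m + 1 = k := by omega
  · rw [Nat.choose_eq_zero_of_lt hmk] at hlt; omega
  · rw [Nat.choose_self] at hlt; omega

theorem exists_admissible_expValue_eq (i n : ℕ) (h : i = 0 → n = 0) :
    ∃ L, Admissible i L ∧ expValue i L = n := by
  induction i generalizing n with
  | zero => exact ⟨[], Admissible.nil 0, (h rfl).symm⟩
  | succ i ih =>
    rcases eq_or_ne n 0 with rfl | hn
    · exact ⟨[], Admissible.nil _, rfl⟩
    obtain ⟨m, hm, hle, hlt⟩ := exists_choose_le_lt_choose_succ i.add_one_ne_zero hn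
    -- The remainder `n - C(m, i+1)` is below `C(m, i)`, which keeps the next entry below `m`.
    rw [Nat.choose_succ_succ'] at hlt
    obtain ⟨L, hL, hval⟩ := ih (n - m.choose (i + 1)) fun hi => by
      subst hi; rw [Nat.choose_zero_right] at hlt; omega
    refine ⟨m :: L, Admissible.cons hm ?_ hL, ?_⟩
    · rintro x hx
      obtain ⟨T, rfl⟩ : ∃ T, L = x :: T := ⟨L.tail, (List.eq_cons_of_mem_head? hx)⟩
      by_contra! hmx
      have := Nat.choose_le_choose i hmx
      rw [expValue_cons] at hval
      omega
    · rw [expValue_cons, Nat.add_sub_cancel, hval]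
      omega

end Macaulay

theorem bigatti_geramita_general (a b : ℕ) (hb : 1 < b)
    (La : List ℕ) (hLa : IsBinExp a b La) :
    IsLeast {t : ℕ | ∃ Lt : List ℕ, IsBinExp t (b - 1) Lt ∧ a ≤ expShiftUp (b - 1) Lt}
      (expShiftDown b La) := by
  obtain ⟨hne, hadm, rfl⟩ := Macaulay.isBinExp_iff.mp hLa
  obtain ⟨l, La, rfl⟩ := List.exists_cons_of_ne_nil hne
  obtain ⟨c, rfl⟩ : ∃ c, b = c + 1 := ⟨b - 1, by omega⟩
  rw [Nat.add_sub_cancel]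
  obtain ⟨Lt, hLt, hLt_val⟩ :=
    Macaulay.exists_admissible_expValue_eq c (expShiftDown (c + 1) (l :: La)) (by omega)
  have hLt_ne : Lt ≠ [] := by
    rintro rfl
    exact hadm.expShiftDown_pos.ne' hLt_val.symm
  refine ⟨⟨Lt, Macaulay.isBinExp_iff.mpr ⟨hLt_ne, hLt, hLt_val⟩, ?_⟩, ?_⟩
  · by_contra! hlt
    obtain ⟨M, hM, hM_val, hM_down⟩ := hLt.exists_succ_expValue_eq
    have := hM.expShiftDown_mono hadm (by omega)
    omega
  · rintro t ⟨Lt', hLt', hle⟩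
    obtain ⟨-, hadm', rfl⟩ := Macaulay.isBinExp_iff.mp hLt'
    calc expShiftDown (c + 1) (l :: La) ≤ expShiftDown (c + 1) (Lt'.map (· + 1)) :=
          hadm.expShiftDown_mono hadm'.map_succ
            (by rwa [Macaulay.expValue_map_succ (hadm'.length_le.trans c.le_succ)])
      _ = expValue c Lt' := Macaulay.expShiftDown_map_succ

/-- Bigatti–Geramita: for positive integers `a, b` with `b > 1`,
the smallest integer `t` with `a ≤ (t_{(b-1)})^{+1}_{+1}` is `t = (a_{(b)})^{-1}_{-1}`. -/
theorem bigatti_geramita (a b : ℕ) (ha : 0 < a) (hb : 1 < b)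
    (La : List ℕ) (hLa : IsBinExp a b La) :
    IsLeast {t : ℕ | ∃ Lt : List ℕ, IsBinExp t (b - 1) Lt ∧ a ≤ expShiftUp (b - 1) Lt}
      (expShiftDown b La) :=
  bigatti_geramita_general a b hb La hLa
end

section
/- Fix n ≥ 2. For each of the n triples (h_{2n}, h_{2n+1}, h_{2n+2}) given by (N−1, N−1, N−1), (N, N−1, N−2), (N+1, N−1, N−3), ..., (N+n−2, N−1, N−n), where N = N(3,2n−2) = C(2n,2), the vector v = (1, 3, 6, ..., N(3,2n−3), h_{2n+2}, h_{2n+1}, h_{2n}) (generic binomial values N(3,i) = C(i+2,2) up to degree 2n−3, then the three specified entries) is differentiable, i.e., its first difference is an O-sequence. -/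
-- entries bound
lemma getD_ge_of_binexp {m d : ℕ} {L : List ℕ} (h : IsBinExp m d L) :
    ∀ j, j < L.length → d - j ≤ L.getD j 0 := by
  obtain ⟨hne, hlen, hchain, hlast, hval⟩ := h
  have hpair := List.isChain_iff_pairwise.1 hchain
  have step : ∀ i, i + 1 < L.length → L.getD (i+1) 0 < L.getD i 0 := by
    intro i hi
    have := List.pairwise_iff_getElem.1 hpair i (i+1) (by omega) hi (by omega)
    rw [List.getD_eq_getElem _ _ hi, List.getD_eq_getElem _ _ (show i < L.length by omega)]
    exact this
  have key : ∀ t i, i + t < L.length → L.getD (i+t) 0 + t ≤ L.getD i 0 := by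
    intro t
    induction t with
    | zero => intro i _; simp
    | succ s ih =>
      intro i hi
      have h1 := step (i+s) (by omega)
      have h2 := ih i (by omega)
      have : i + (s+1) = (i+s)+1 := by omega
      rw [this]; omega
  intro j hj
  have hlast' : L.getLast! = L.getD (L.length - 1) 0 := by
    rw [List.getLast!_eq_getElem!, getElem!_pos _ _ (by cases L; simp at hne; simp),
      List.getD_eq_getElem _ _ (by cases L; simp at hne; simp)]
  have hk := key (L.length - 1 - j) j (by omega)
  have : j + (L.length - 1 - j) = L.length - 1 := by omega
  rw [this] at hk
  rw [hlast'] at hlast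
  omega

lemma expValue_le_expShiftUp (d : ℕ) (L : List ℕ) : expValue d L ≤ expShiftUp d L := by
  refine Finset.sum_le_sum fun j _ => ?_
  rw [Nat.choose_succ_succ]
  exact Nat.le_add_right _ _

lemma expShiftUp_ge_succ {m d : ℕ} {L : List ℕ} (h : IsBinExp m d L) (hdm : d < m) :
    m + 1 ≤ expShiftUp d L := by
  have hge := getD_ge_of_binexp h
  obtain ⟨hne, hlen, hchain, hlast, hval⟩ := h
  by_cases hex : ∃ j, j < L.length ∧ d - j + 1 ≤ L.getD j 0
  · obtain ⟨j, hj, hjv⟩ := hex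
    have hlt : expValue d L < expShiftUp d L := by
      have hterm : (L.getD j 0).choose (d - j) < (L.getD j 0 + 1).choose (d - j + 1) := by
        rw [Nat.choose_succ_succ]
        have h1 : 0 < (L.getD j 0).choose ((d - j).succ) := Nat.choose_pos hjv
        omega
      exact Finset.sum_lt_sum (fun i _ => by
        rw [Nat.choose_succ_succ]; exact Nat.le_add_right _ _)
        ⟨j, Finset.mem_range.2 hj, hterm⟩
    omega
  · push_neg at hex
    exfalso
    have heq : ∀ j, j < L.length → L.getD j 0 = d - j := by
      intro j hj
      have := hex j hj
      have := hge j hj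
      omega
    have hv2 : expValue d L = L.length := by
      unfold expValue
      rw [Finset.sum_congr rfl (fun j hj => by
        rw [heq j (Finset.mem_range.1 hj), Nat.choose_self])]
      simp
    omega

lemma N3succ (d : ℕ) : (3 - 1 + (d+1)).choose (d+1) = (3 - 1 + d).choose d + (d + 2) := by
  have h1 : 3 - 1 + (d+1) = (d+2) + 1 := by omega
  have h2 : 3 - 1 + d = d + 2 := by omega
  rw [h1, h2, Nat.choose_succ_succ, Nat.choose_succ_self_right]

lemma N3succ' (d : ℕ) : N 3 (d+1) = N 3 d + (d+2) := N3succ d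

/-- fix `n ≥ 2` and let `NN = N(3,2n-2) = C(2n,2)`.  For each
`0 ≤ k ≤ n-1`, the vector
`v = (1, 3, 6, ..., N(3,2n-3), NN-1-k, NN-1, NN+k-1)`
(generic values `N(3,i)` in degrees `0,...,2n-3`, then `h_{2n+2}, h_{2n+1}, h_{2n}`)
is differentiable, i.e. its first difference is an O-sequence. -/
theorem first_half_differentiable (n k : ℕ) (hn : 2 ≤ n) (hk : k < n) :
    OSeq (firstDiff (((List.range (2 * n - 2)).map fun i => N 3 i) ++
      [N 3 (2 * n - 2) - 1 - k, N 3 (2 * n - 2) - 1, N 3 (2 * n - 2) + k - 1])) := by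
  set v := ((List.range (2 * n - 2)).map fun i => N 3 i) ++
      [N 3 (2 * n - 2) - 1 - k, N 3 (2 * n - 2) - 1, N 3 (2 * n - 2) + k - 1] with hvdef
  have hvlen : v.length = 2 * n + 1 := by
    simp [hvdef]; omega
  have hwlen : (firstDiff v).length = 2 * n + 1 := by
    simp [firstDiff, hvlen]
  -- entries of v
  have hvget : ∀ d, d < 2 * n - 2 → v.getD d 0 = N 3 d := by
    intro d hd
    rw [hvdef, List.getD_append _ _ _ _ (by simpa using hd)]
    rw [List.getD_eq_getElem _ _ (by simpa using hd)]
    simp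
  have hvtail : ∀ j, j < 3 → v.getD (2 * n - 2 + j) 0 =
      [N 3 (2 * n - 2) - 1 - k, N 3 (2 * n - 2) - 1, N 3 (2 * n - 2) + k - 1].getD j 0 := by
    intro j hj
    rw [hvdef, List.getD_append_right _ _ _ _ (by simp)]
    congr 1
    simp
  -- entries of firstDiff v
  have hwget : ∀ d, d < 2 * n + 1 → (firstDiff v).getD d 0
      = v.getD d 0 - (0 :: v).getD d 0 := by
    intro d hd
    rw [List.getD_eq_getElem _ _ (by rw [hwlen]; exact hd)]
    simp only [firstDiff]
    rw [List.getElem_zipWith]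
    rw [List.getD_eq_getElem _ _ (by omega), List.getD_eq_getElem _ _ (by simp [hvlen]; omega)]
  have hNN : N 3 (2 * n - 2) = N 3 (2 * n - 3) + (2 * n - 1) := by
    have := N3succ' (2 * n - 3)
    rw [show 2 * n - 3 + 1 = 2 * n - 2 by omega] at this
    rw [this]
    omega
  have hmid : ∀ d, 1 ≤ d → d ≤ 2 * n - 3 → (firstDiff v).getD d 0 = d + 1 := by
    intro d hd1 hd2
    obtain ⟨e, rfl⟩ : ∃ e, d = e + 1 := ⟨d - 1, by omega⟩
    rw [hwget _ (by omega), List.getD_cons_succ]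
    rw [hvget _ (by omega), hvget _ (by omega)]
    have := N3succ' e
    omega
  have h2n2 : (firstDiff v).getD (2 * n - 2) 0 = 2 * n - 2 - k := by
    have h := hwget (2 * n - 2) (by omega)
    have h0 := hvtail 0 (by omega)
    rw [show 2*n-2+0 = 2*n-2 by omega] at h0
    have hc : (0 :: v).getD (2*n-2) 0 = v.getD (2*n-3) 0 := by
      rw [show (2*n-2:ℕ) = (2*n-3)+1 by omega, List.getD_cons_succ]
    rw [h, hc, h0, hvget (2*n-3) (by omega)]
    simp only [List.getD_cons_zero]
    omega
  have h2n1 : (firstDiff v).getD (2 * n - 1) 0 = k := by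
    have h := hwget (2 * n - 1) (by omega)
    have h0 := hvtail 0 (by omega)
    rw [show 2*n-2+0 = 2*n-2 by omega] at h0
    have h1 := hvtail 1 (by omega)
    rw [show 2*n-2+1 = 2*n-1 by omega] at h1
    have hc : (0 :: v).getD (2*n-1) 0 = v.getD (2*n-2) 0 := by
      rw [show (2*n-1:ℕ) = (2*n-2)+1 by omega, List.getD_cons_succ]
    rw [h, hc, h1, h0]
    simp only [List.getD_cons_zero, List.getD_cons_succ]
    omega
  have h2n0 : (firstDiff v).getD (2 * n) 0 = k := by
    have h := hwget (2 * n) (by omega)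
    have h1 := hvtail 1 (by omega)
    rw [show 2*n-2+1 = 2*n-1 by omega] at h1
    have h2 := hvtail 2 (by omega)
    rw [show 2*n-2+2 = 2*n by omega] at h2
    have hc : (0 :: v).getD (2*n) 0 = v.getD (2*n-1) 0 := by
      have hx : ((0:ℕ) :: v).getD ((2*n-1)+1) 0 = v.getD (2*n-1) 0 := List.getD_cons_succ
      rwa [show (2*n-1)+1 = 2*n by omega] at hx
    rw [h, hc, h2, h1]
    simp only [List.getD_cons_zero, List.getD_cons_succ]
    omega
  constructor
  · rw [hwget 0 (by omega), List.getD_cons_zero, hvget 0 (by omega)]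
    simp [N]
  · intro d hd1 hd2 L hL
    rw [hwlen] at hd2
    have hval' := hL.2.2.2.2
    have h1 := expValue_le_expShiftUp d L
    by_cases hcase : d + 1 ≤ 2 * n - 3
    · have ha := hmid d hd1 (by omega)
      have hb := hmid (d+1) (by omega) hcase
      rw [ha] at hL
      have h2 := expShiftUp_ge_succ hL (by omega)
      omega
    · -- d ∈ {2n-3, 2n-2, 2n-1}
      rcases (show d = 2*n-3 ∨ d = 2*n-2 ∨ d = 2*n-1 by omega) with hd | hd | hd
      · have ha := hmid d hd1 (by omega)
        have hb : (firstDiff v).getD (d+1) 0 = 2*n-2-k := by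
          rw [show d+1 = 2*n-2 by omega]; exact h2n2
        rw [ha] at hval'
        omega
      · have ha : (firstDiff v).getD d 0 = 2*n-2-k := by rw [hd]; exact h2n2
        have hb : (firstDiff v).getD (d+1) 0 = k := by
          rw [show d+1 = 2*n-1 by omega]; exact h2n1
        rw [ha] at hval'
        omega
      · have ha : (firstDiff v).getD d 0 = k := by rw [hd]; exact h2n1
        have hb : (firstDiff v).getD (d+1) 0 = k := by
          rw [show d+1 = 2*n by omega]; exact h2n0
        rw [ha] at hval'
        omega
end
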